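/- Let K be a field of characteristic 2 and let A be the quotient of the free associative K-algebra K⟨a, b⟩ by the two-sided ideal generated by a², b² − b, and ab − ba − a. Let ω be the two-sided ideal of A generated by the images of a and b. Then for all w, x, y, z ∈ ω, wxyz = wyxz (i.e., ω satisfies the semigroup identity wxyz − wyxz = 0). -/

import Mathlib

/-- The two-sided ideal of the free associative algebra `K⟨a, b⟩` generated by the
relations `a²`, `b² − b` and `ab − ba − a` (where `a, b` are the two generators). -/
noncomputable def relationsIdeal (K : Type*) [Field K] :
    TwoSidedIdeal (FreeAlgebra K (Fin 2)) :=
  TwoSidedIdeal.span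
    {FreeAlgebra.ι K 0 * FreeAlgebra.ι K 0,
     FreeAlgebra.ι K 1 * FreeAlgebra.ι K 1 - FreeAlgebra.ι K 1,
     FreeAlgebra.ι K 0 * FreeAlgebra.ι K 1 - FreeAlgebra.ι K 1 * FreeAlgebra.ι K 0
       - FreeAlgebra.ι K 0}

/-- The algebra `A = K⟨a, b⟩ / (a², b² − b, ab − ba − a)`, i.e. the restricted enveloping
algebra of the 2-dimensional restricted Lie algebra with `[a,b] = a`, `a^[2] = 0`,
`b^[2] = b`. -/
noncomputable abbrev EnvAlgebra (K : Type*) [Field K] :=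
  (relationsIdeal K).ringCon.Quotient

/-- The image of the generator `a` in `A`. -/
noncomputable def abar (K : Type*) [Field K] : EnvAlgebra K :=
  (relationsIdeal K).ringCon.mk' (FreeAlgebra.ι K 0)

/-- The image of the generator `b` in `A`. -/
noncomputable def bbar (K : Type*) [Field K] : EnvAlgebra K :=
  (relationsIdeal K).ringCon.mk' (FreeAlgebra.ι K 1)

/-- The two-sided ideal `ω` of `A` generated by the images of `a` and `b`
(the augmentation ideal of the restricted enveloping algebra). -/
noncomputable def omegaIdeal (K : Type*) [Field K] : TwoSidedIdeal (EnvAlgebra K) :=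
  TwoSidedIdeal.span {abar K, bbar K}

/-!
Write `P = span_K {a, ab}`. The relations `a² = 0`, `b² = b`, `ba = ab − a` show that `P` is a
two-sided ideal containing `ab − ba = a`, so every commutator of `A` lies in `P`, because `a` and
`b` generate `A`. On the other hand `x c y = 0` for `x, y ∈ {a, b}` and `c ∈ P`, and this
propagates to `ω P ω = 0`. Hence `w (xy − yx) z = 0` for `w, z ∈ ω` and arbitrary `x, y`.
-/

section Generators

variable {K R : Type*} [CommRing K] [Ring R] [Algebra K R] {s : Set R}

theorem TwoSidedIdeal.mul_sub_mul_mem_of_adjoin_eq_top (hs : Algebra.adjoin K s = ⊤)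
    {I : TwoSidedIdeal R} (h : ∀ p ∈ s, ∀ q ∈ s, p * q - q * p ∈ I) (x y : R) :
    x * y - y * x ∈ I := by
  have key : ∀ y : R, (∀ p ∈ s, p * y - y * p ∈ I) → ∀ x : R, x * y - y * x ∈ I := by
    intro y hy x
    have hx : x ∈ Algebra.adjoin K s := hs ▸ Algebra.mem_top
    induction hx using Algebra.adjoin_induction with
    | mem p hp => exact hy p hp
    | algebraMap k => rw [Algebra.commutes, sub_self]; exact zero_mem _
    | add x x' _ _ h h' =>
      rw [add_mul, mul_add, add_sub_add_comm]; exact add_mem _ h h'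
    | mul x x' _ _ h h' =>
      rw [show x * x' * y - y * (x * x') = x * (x' * y - y * x') + (x * y - y * x) * x' by
        noncomm_ring]
      exact add_mem _ (mul_mem_left _ _ _ h') (mul_mem_right _ _ _ h)
  refine key y (fun p hp => ?_) x
  simpa using neg_mem _ (key p (fun q hq => h q hq p hp) y)

variable {t : Set R}

theorem Submodule.mul_mem_span_of_adjoin_eq_top (hs : Algebra.adjoin K s = ⊤)
    (h : ∀ p ∈ s, ∀ c ∈ t, p * c ∈ span K t) (r : R) {c : R} (hc : c ∈ span K t) :
    r * c ∈ span K t := by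
  have hr : r ∈ Algebra.adjoin K s := hs ▸ Algebra.mem_top
  induction hr using Algebra.adjoin_induction generalizing c with
  | mem p hp =>
    exact (span_le (p := (span K t).comap (LinearMap.mulLeft K p))).mpr (h p hp) hc
  | algebraMap k => rw [← Algebra.smul_def]; exact smul_mem _ k hc
  | add r r' _ _ h h' => rw [add_mul]; exact add_mem (h hc) (h' hc)
  | mul r r' _ _ h h' => rw [mul_assoc]; exact h (h' hc)

theorem Submodule.mul_mem_span_of_adjoin_eq_top' (hs : Algebra.adjoin K s = ⊤)
    (h : ∀ p ∈ s, ∀ c ∈ t, c * p ∈ span K t) (r : R) {c : R} (hc : c ∈ span K t) :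
    c * r ∈ span K t := by
  have hr : r ∈ Algebra.adjoin K s := hs ▸ Algebra.mem_top
  induction hr using Algebra.adjoin_induction generalizing c with
  | mem p hp =>
    exact (span_le (p := (span K t).comap (LinearMap.mulRight K p))).mpr (h p hp) hc
  | algebraMap k => rw [← Algebra.commutes, ← Algebra.smul_def]; exact smul_mem _ k hc
  | add r r' _ _ h h' => rw [mul_add]; exact add_mem (h hc) (h' hc)
  | mul r r' _ _ h h' => rw [← mul_assoc]; exact h' (h hc)

end Generators

section Sandwich

variable {R : Type*} [Ring R] {s : Set R} {I : TwoSidedIdeal R}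

theorem TwoSidedIdeal.mul_mul_eq_zero_of_mem_span_right {x : R}
    (h : ∀ c ∈ I, ∀ y ∈ s, x * c * y = 0) {c v : R} (hc : c ∈ I) (hv : v ∈ span s) :
    x * c * v = 0 := by
  induction hv using TwoSidedIdeal.span_induction generalizing c with
  | mem y hy => exact h c hc y hy
  | zero => rw [mul_zero]
  | add v v' _ _ h h' => rw [mul_add, h hc, h' hc, add_zero]
  | neg v _ h => rw [mul_neg, h hc, neg_zero]
  | left_absorb r v _ h => rw [← mul_assoc, mul_assoc x]; exact h (mul_mem_right _ _ _ hc)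
  | right_absorb r v _ h => rw [← mul_assoc, h hc, zero_mul]

theorem TwoSidedIdeal.mul_mul_eq_zero_of_mem_span
    (h : ∀ x ∈ s, ∀ c ∈ I, ∀ y ∈ s, x * c * y = 0) {u c v : R} (hu : u ∈ span s) (hc : c ∈ I)
    (hv : v ∈ span s) : u * c * v = 0 := by
  induction hu using TwoSidedIdeal.span_induction generalizing c with
  | mem x hx => exact mul_mul_eq_zero_of_mem_span_right (h x hx) hc hv
  | zero => rw [zero_mul, zero_mul]
  | add u u' _ _ h h' => rw [add_mul, add_mul, h hc, h' hc, add_zero]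
  | neg u _ h => rw [neg_mul, neg_mul, h hc, neg_zero]
  | left_absorb r u _ h => rw [mul_assoc r, mul_assoc r, h hc, mul_zero]
  | right_absorb r u _ h => rw [mul_assoc u]; exact h (mul_mem_left _ _ _ hc)

end Sandwich

namespace EnvAlgebra

variable {K : Type*} [Field K]

theorem mk'_eq_zero {r : FreeAlgebra K (Fin 2)} (hr : r ∈ relationsIdeal K) :
    (relationsIdeal K).ringCon.mk' r = 0 :=
  (RingCon.eq _).mpr hr

theorem abar_mul_abar : abar K * abar K = 0 :=
  mk'_eq_zero (TwoSidedIdeal.subset_span (by simp))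

theorem bbar_mul_bbar : bbar K * bbar K = bbar K :=
  sub_eq_zero.mp (mk'_eq_zero (TwoSidedIdeal.subset_span (by simp)))

theorem bbar_mul_abar : bbar K * abar K = abar K * bbar K - abar K := by
  have h : abar K * bbar K - bbar K * abar K - abar K = 0 :=
    mk'_eq_zero (TwoSidedIdeal.subset_span (by simp))
  rw [← sub_eq_zero, ← neg_eq_zero, ← h]
  abel

theorem abar_mul_bbar_mul_abar : abar K * bbar K * abar K = 0 := by
  rw [mul_assoc, bbar_mul_abar, mul_sub, ← mul_assoc, abar_mul_abar, zero_mul, sub_self]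

theorem bbar_mul_abar_mul_bbar : bbar K * abar K * bbar K = 0 := by
  rw [bbar_mul_abar, sub_mul, mul_assoc, bbar_mul_bbar, sub_self]

theorem adjoin_abar_bbar : Algebra.adjoin K {abar K, bbar K} = ⊤ := by
  have h : {abar K, bbar K} = (relationsIdeal K).ringCon.mkₐ K '' Set.range (FreeAlgebra.ι K) := by
    ext u
    simp [Fin.exists_fin_two, abar, bbar, eq_comm]
  rw [h, ← AlgHom.map_adjoin, FreeAlgebra.adjoin_range_ι, Algebra.map_top, AlgHom.range_eq_top]
  exact RingCon.mkₐ_surjective _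

theorem generator_mul_mem_span : ∀ p ∈ ({abar K, bbar K} : Set _),
    ∀ c ∈ ({abar K, abar K * bbar K} : Set _),
      p * c ∈ Submodule.span K {abar K, abar K * bbar K} := by
  simp only [Set.mem_insert_iff, Set.mem_singleton_iff]
  rintro p (rfl | rfl) c (rfl | rfl)
  · rw [abar_mul_abar]; exact zero_mem _
  · rw [← mul_assoc, abar_mul_abar, zero_mul]; exact zero_mem _
  · rw [bbar_mul_abar]
    exact sub_mem (Submodule.subset_span (by simp)) (Submodule.subset_span (by simp))
  · rw [← mul_assoc, bbar_mul_abar_mul_bbar]; exact zero_mem _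

theorem mul_generator_mem_span : ∀ p ∈ ({abar K, bbar K} : Set _),
    ∀ c ∈ ({abar K, abar K * bbar K} : Set _),
      c * p ∈ Submodule.span K {abar K, abar K * bbar K} := by
  simp only [Set.mem_insert_iff, Set.mem_singleton_iff]
  rintro p (rfl | rfl) c (rfl | rfl)
  · rw [abar_mul_abar]; exact zero_mem _
  · rw [abar_mul_bbar_mul_abar]; exact zero_mem _
  · exact Submodule.subset_span (by simp)
  · rw [mul_assoc, bbar_mul_bbar]; exact Submodule.subset_span (by simp)

variable (K) in
noncomputable def abarIdeal : TwoSidedIdeal (EnvAlgebra K) :=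
  .mk' (Submodule.span K {abar K, abar K * bbar K}) (zero_mem _) add_mem neg_mem
    (Submodule.mul_mem_span_of_adjoin_eq_top adjoin_abar_bbar generator_mul_mem_span _)
    (Submodule.mul_mem_span_of_adjoin_eq_top' adjoin_abar_bbar mul_generator_mem_span _)

theorem mem_abarIdeal {c : EnvAlgebra K} :
    c ∈ abarIdeal K ↔ c ∈ Submodule.span K {abar K, abar K * bbar K} :=
  TwoSidedIdeal.mem_mk' ..

theorem abar_mem_abarIdeal : abar K ∈ abarIdeal K :=
  mem_abarIdeal.mpr (Submodule.subset_span (by simp))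

theorem commutator_mem_abarIdeal (x y : EnvAlgebra K) : x * y - y * x ∈ abarIdeal K := by
  refine TwoSidedIdeal.mul_sub_mul_mem_of_adjoin_eq_top adjoin_abar_bbar ?_ x y
  simp only [Set.mem_insert_iff, Set.mem_singleton_iff]
  rintro p (rfl | rfl) q (rfl | rfl)
  · rw [sub_self]; exact zero_mem _
  · rw [bbar_mul_abar, sub_sub_cancel]; exact abar_mem_abarIdeal
  · rw [bbar_mul_abar, sub_sub_cancel_left]; exact neg_mem abar_mem_abarIdeal
  · rw [sub_self]; exact zero_mem _

theorem mul_abar_mul_eq_zero {x y : EnvAlgebra K} (hx : x ∈ ({abar K, bbar K} : Set _))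
    (hy : y ∈ ({abar K, bbar K} : Set _)) : x * abar K * y = 0 := by
  simp only [Set.mem_insert_iff, Set.mem_singleton_iff] at hx hy
  rcases hx with rfl | rfl
  · rw [abar_mul_abar, zero_mul]
  · rcases hy with rfl | rfl
    · rw [mul_assoc, abar_mul_abar, mul_zero]
    · exact bbar_mul_abar_mul_bbar

theorem mul_mul_eq_zero_of_mem_abarIdeal {x c y : EnvAlgebra K}
    (hx : x ∈ ({abar K, bbar K} : Set _)) (hc : c ∈ abarIdeal K)
    (hy : y ∈ ({abar K, bbar K} : Set _)) : x * c * y = 0 := by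
  rw [mem_abarIdeal] at hc
  induction hc using Submodule.span_induction with
  | mem c hc =>
    simp only [Set.mem_insert_iff, Set.mem_singleton_iff] at hc
    rcases hc with rfl | rfl
    · exact mul_abar_mul_eq_zero hx hy
    · rw [← mul_assoc, mul_abar_mul_eq_zero hx (by simp), zero_mul]
  | zero => rw [mul_zero, zero_mul]
  | add c c' _ _ h h' => rw [mul_add, add_mul, h, h', add_zero]
  | smul k c _ h => rw [mul_smul_comm, smul_mul_assoc, h, smul_zero]

end EnvAlgebra

theorem omega_satisfies_semigroup_identity_general (K : Type*) [Field K]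
    (w x y z : EnvAlgebra K) (hw : w ∈ omegaIdeal K) (hz : z ∈ omegaIdeal K) :
    w * x * y * z = w * y * x * z := by
  have hzero : w * (x * y - y * x) * z = 0 :=
    TwoSidedIdeal.mul_mul_eq_zero_of_mem_span
      (fun _ hp _ hc _ hq => EnvAlgebra.mul_mul_eq_zero_of_mem_abarIdeal hp hc hq)
      hw (EnvAlgebra.commutator_mem_abarIdeal x y) hz
  rw [← sub_eq_zero, ← hzero]
  noncomm_ring

/-- Proposition 3.2: if `K` has characteristic `2`, then `ω` satisfies the semigroup
identity `w*x*y*z = w*y*x*z`. -/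
theorem omega_satisfies_semigroup_identity (K : Type*) [Field K] [CharP K 2]
    (w x y z : EnvAlgebra K) (hw : w ∈ omegaIdeal K) (hx : x ∈ omegaIdeal K)
    (hy : y ∈ omegaIdeal K) (hz : z ∈ omegaIdeal K) :
    w * x * y * z = w * y * x * z :=
  omega_satisfies_semigroup_identity_general K w x y z hw hz
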